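/- Let G be a finite simple graph on the vertex set {1,…,n} with m edges, and let σ = pos_ℚ(A_G) ⊆ ℚ^{n+m}. Then σ has exactly 2m+n extreme rays: the extreme rays of σ are precisely the pairwise distinct rays {λa : λ ∈ ℚ, λ ≥ 0} for a ∈ A_G, and each such ray is a face of σ (i.e., for each a ∈ A_G there exists c ∈ ℚ^{n+m} with c·x ≥ 0 for all x ∈ σ and σ ∩ {x : c·x = 0} = {λa : λ ∈ ℚ, λ ≥ 0}). -/

import Mathlib

open MvPolynomial

/-- The index set of the vector configuration `A_G`: one vector for each vertex `i` (`a_{ii}`)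
and two (`a_{ij}`, `a_{ji}`) for each edge `{i,j}` of `G`; in total `2m + n` vectors. -/
abbrev VarSet (n : ℕ) (G : SimpleGraph (Fin n)) : Type :=
  {p : Fin n × Fin n // p.1 = p.2 ∨ G.Adj p.1 p.2}

/-- The index `t` of the edge `{i,j}` in the fixed enumeration `z` of the edges of `G`. -/
noncomputable def edgeIdx {n m : ℕ} {G : SimpleGraph (Fin n)} (z : Fin m ≃ G.edgeSet)
    {i j : Fin n} (h : G.Adj i j) : Fin m :=
  z.symm ⟨s(i, j), G.mem_edgeSet.mpr h⟩

/-- The vector configuration `A_G`, viewed in `ℚ^{n+m}`: `a_{jj} = e_j`; for the edge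
`z_t = {i,j}` with `i < j`, `a_{ij} = e_i + e_j - e_{n+t}` and `a_{ji} = e_{n+t}`. -/
noncomputable def aQ (n m : ℕ) (G : SimpleGraph (Fin n)) (z : Fin m ≃ G.edgeSet)
    (v : VarSet n G) : (Fin n ⊕ Fin m) → ℚ :=
  if hij : v.1.1 = v.1.2 then Pi.single (Sum.inl v.1.1) 1
  else
    have hadj : G.Adj v.1.1 v.1.2 := v.2.resolve_left hij
    if v.1.1 < v.1.2 then
      Pi.single (Sum.inl v.1.1) 1 + Pi.single (Sum.inl v.1.2) 1
        - Pi.single (Sum.inr (edgeIdx z hadj)) 1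
    else Pi.single (Sum.inr (edgeIdx z hadj)) 1

/-- The cone `σ = pos_ℚ(A_G)` of all non-negative rational combinations of the vectors of
`A_G`. -/
noncomputable def posCone (n m : ℕ) (G : SimpleGraph (Fin n)) [DecidableRel G.Adj]
    (z : Fin m ≃ G.edgeSet) : Set ((Fin n ⊕ Fin m) → ℚ) :=
  {x | ∃ c : VarSet n G → ℚ, (∀ v, 0 ≤ c v) ∧ x = ∑ v, c v • aQ n m G z v}

/-- The standard inner product on `ℚ^{n+m}`. -/
def dotQ {n m : ℕ} (c x : (Fin n ⊕ Fin m) → ℚ) : ℚ := ∑ s, c s * x s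

/-- `F` is a face of the cone `σ`: `F = σ ∩ {x : c·x = 0}` for some `c` with `c·x ≥ 0` on `σ`. -/
def IsFace {n m : ℕ} (σ F : Set ((Fin n ⊕ Fin m) → ℚ)) : Prop :=
  ∃ c : (Fin n ⊕ Fin m) → ℚ, (∀ x ∈ σ, 0 ≤ dotQ c x) ∧ F = σ ∩ {x | dotQ c x = 0}

/-- The ray `{λ a : λ ∈ ℚ, λ ≥ 0}` spanned by `a`. -/
def ray {n m : ℕ} (a : (Fin n ⊕ Fin m) → ℚ) : Set ((Fin n ⊕ Fin m) → ℚ) :=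
  {x | ∃ l : ℚ, 0 ≤ l ∧ x = l • a}

/-- `F` is an extreme ray of `σ`: a face of `σ` of the form `{λ a : λ ≥ 0}`, `a ≠ 0`. -/
def IsExtremeRay {n m : ℕ} (σ F : Set ((Fin n ⊕ Fin m) → ℚ)) : Prop :=
  IsFace σ F ∧ ∃ a : (Fin n ⊕ Fin m) → ℚ, a ≠ 0 ∧ F = ray a

/-!
Every vector `a ∈ A_G` is exposed: some linear functional is non-negative on `A_G` and vanishes
on `A_G` exactly at `a`, so it cuts the ray through `a` out of `σ` as a face. Conversely, if
`c` cuts out a ray `ℚ≥0 · b` and `b = ∑ d_a a`, then `c` vanishes on every `a` with `d_a > 0`,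
so each such `d_a a` lies in the ray: `b` is a positive multiple of a generator. The rays are
pairwise distinct because the functional exposing `a` is positive on every other generator,
and `|A_G| = n + 2m` counts the vertices and the two orientations of each edge.
-/

section DotRay

variable {n m : ℕ}

lemma dotQ_eq_dotProduct (c x : (Fin n ⊕ Fin m) → ℚ) : dotQ c x = c ⬝ᵥ x := rfl

lemma dotQ_smul (c x : (Fin n ⊕ Fin m) → ℚ) (l : ℚ) : dotQ c (l • x) = l * dotQ c x := by
  simp only [dotQ_eq_dotProduct, dotProduct_smul, smul_eq_mul]

lemma mem_ray_self (b : (Fin n ⊕ Fin m) → ℚ) : b ∈ ray b := ⟨1, zero_le_one, (one_smul _ _).symm⟩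

lemma ray_smul_of_pos {b : (Fin n ⊕ Fin m) → ℚ} {l : ℚ} (hl : 0 < l) : ray (l • b) = ray b := by
  ext x
  constructor
  · rintro ⟨u, hu, rfl⟩
    exact ⟨u * l, mul_nonneg hu hl.le, by rw [smul_smul]⟩
  · rintro ⟨u, hu, rfl⟩
    exact ⟨u / l, div_nonneg hu hl.le, by rw [smul_smul, div_mul_cancel₀ _ hl.ne']⟩

end DotRay

section PosSpan

variable {n m : ℕ} {ι : Type*} [Fintype ι] (a : ι → (Fin n ⊕ Fin m) → ℚ)

def posSpan : Set ((Fin n ⊕ Fin m) → ℚ) :=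
  {x | ∃ d : ι → ℚ, (∀ i, 0 ≤ d i) ∧ x = ∑ i, d i • a i}

def IsExposedGenerator (i : ι) : Prop :=
  ∃ c : (Fin n ⊕ Fin m) → ℚ, dotQ c (a i) = 0 ∧ ∀ j, j ≠ i → 0 < dotQ c (a j)

lemma dotQ_sum_smul (c : (Fin n ⊕ Fin m) → ℚ) (d : ι → ℚ) :
    dotQ c (∑ i, d i • a i) = ∑ i, d i * dotQ c (a i) := by
  simp only [dotQ_eq_dotProduct, dotProduct_sum, dotProduct_smul, smul_eq_mul]

lemma smul_mem_posSpan {l : ℚ} (hl : 0 ≤ l) (i : ι) : l • a i ∈ posSpan a := by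
  classical
  refine ⟨Pi.single i l, fun j => ?_, ?_⟩
  · rcases eq_or_ne j i with rfl | hj
    · simpa using hl
    · simp [hj]
  · rw [Fintype.sum_eq_single i fun j hj => by simp [hj], Pi.single_eq_same]

lemma dotQ_nonneg_of_mem_posSpan {c : (Fin n ⊕ Fin m) → ℚ} (hc : ∀ i, 0 ≤ dotQ c (a i))
    {x : (Fin n ⊕ Fin m) → ℚ} (hx : x ∈ posSpan a) : 0 ≤ dotQ c x := by
  obtain ⟨d, hd, rfl⟩ := hx
  rw [dotQ_sum_smul]
  exact Finset.sum_nonneg fun i _ => mul_nonneg (hd i) (hc i)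

lemma mul_dotQ_eq_zero_of_dotQ_sum_eq_zero {c : (Fin n ⊕ Fin m) → ℚ}
    (hc : ∀ i, 0 ≤ dotQ c (a i)) {d : ι → ℚ} (hd : ∀ i, 0 ≤ d i)
    (h : dotQ c (∑ i, d i • a i) = 0) (i : ι) : d i * dotQ c (a i) = 0 := by
  rw [dotQ_sum_smul] at h
  exact (Finset.sum_eq_zero_iff_of_nonneg fun j _ => mul_nonneg (hd j) (hc j)).mp h i
    (Finset.mem_univ i)

variable {a}

lemma isFace_ray_of_isExposedGenerator {i : ι} (hi : IsExposedGenerator a i) :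
    IsFace (posSpan a) (ray (a i)) := by
  obtain ⟨c, hci, hc⟩ := hi
  have hc_nonneg : ∀ j, 0 ≤ dotQ c (a j) := fun j => by
    rcases eq_or_ne j i with rfl | hj
    exacts [hci.ge, (hc j hj).le]
  refine ⟨c, fun x => dotQ_nonneg_of_mem_posSpan a hc_nonneg, Set.ext fun x => ⟨?_, ?_⟩⟩
  · rintro ⟨l, hl, rfl⟩
    exact ⟨smul_mem_posSpan a hl i, by simp [dotQ_smul, hci]⟩
  · rintro ⟨⟨d, hd, rfl⟩, hx⟩
    have hd_eq_zero : ∀ j, j ≠ i → d j = 0 := fun j hj =>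
      (mul_eq_zero.mp (mul_dotQ_eq_zero_of_dotQ_sum_eq_zero a hc_nonneg hd hx j)).resolve_right
        (hc j hj).ne'
    refine ⟨d i, hd i, ?_⟩
    rw [Fintype.sum_eq_single i fun j hj => by rw [hd_eq_zero j hj, zero_smul]]

lemma exists_eq_ray_of_isExtremeRay {F : Set ((Fin n ⊕ Fin m) → ℚ)}
    (hF : IsExtremeRay (posSpan a) F) : ∃ i, F = ray (a i) := by
  obtain ⟨⟨c, hc_nonneg, hcF⟩, b, hb, rfl⟩ := hF
  have hc : ∀ i, 0 ≤ dotQ c (a i) := fun i =>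
    hc_nonneg _ (by simpa using smul_mem_posSpan a zero_le_one i)
  obtain ⟨⟨d, hd, hbd⟩, hcb⟩ : b ∈ posSpan a ∩ {x | dotQ c x = 0} := hcF ▸ mem_ray_self b
  obtain ⟨i, hi⟩ : ∃ i, d i • a i ≠ 0 := by
    by_contra! h
    exact hb (by rw [hbd, Finset.sum_eq_zero fun i _ => h i])
  have hdi : 0 < d i := (hd i).lt_of_ne fun h => hi (by rw [← h, zero_smul])
  have hi_mem : d i • a i ∈ ray b := by
    rw [hcF]
    refine ⟨smul_mem_posSpan a (hd i) i, ?_⟩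
    show dotQ c _ = 0
    rw [dotQ_smul]
    exact mul_dotQ_eq_zero_of_dotQ_sum_eq_zero a hc hd (hbd ▸ hcb) i
  obtain ⟨l, hl, hlb⟩ := hi_mem
  have hl_pos : 0 < l := hl.lt_of_ne fun h => hi (by rw [hlb, ← h, zero_smul])
  have hai : a i = (l / d i) • b := by
    rw [div_eq_inv_mul, ← smul_smul, ← hlb, smul_smul, inv_mul_cancel₀ hdi.ne', one_smul]
  exact ⟨i, by rw [hai, ray_smul_of_pos (div_pos hl_pos hdi)]⟩

omit [Fintype ι] in
lemma ray_injective (hexp : ∀ i, IsExposedGenerator a i) (hne : ∀ i, a i ≠ 0) :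
    Function.Injective fun i => ray (a i) := by
  intro i j hij
  obtain ⟨l, -, hl⟩ : a j ∈ ray (a i) := by
    rw [show ray (a i) = ray (a j) from hij]
    exact mem_ray_self (a j)
  obtain ⟨c, hcj, hc⟩ := hexp j
  by_contra hji
  have hl0 : l = 0 := by
    rw [hl, dotQ_smul] at hcj
    exact (mul_eq_zero.mp hcj).resolve_right (hc i hji).ne'
  exact hne j (by rw [hl, hl0, zero_smul])

lemma setOf_isExtremeRay_posSpan (hexp : ∀ i, IsExposedGenerator a i) (hne : ∀ i, a i ≠ 0) :
    {F | IsExtremeRay (posSpan a) F} = Set.range fun i => ray (a i) := by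
  ext F
  constructor
  · intro hF
    obtain ⟨i, rfl⟩ := exists_eq_ray_of_isExtremeRay hF
    exact ⟨i, rfl⟩
  · rintro ⟨i, rfl⟩
    exact ⟨isFace_ray_of_isExposedGenerator (hexp i), a i, hne i, rfl⟩

end PosSpan

section GraphCone

variable {n m : ℕ} {G : SimpleGraph (Fin n)} (z : Fin m ≃ G.edgeSet)

lemma dotQ_aQ_of_eq (c : (Fin n ⊕ Fin m) → ℚ) {v : VarSet n G} (hv : v.1.1 = v.1.2) :
    dotQ c (aQ n m G z v) = c (.inl v.1.1) := by
  rw [aQ, dif_pos hv, dotQ_eq_dotProduct, dotProduct_single_one]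

lemma dotQ_aQ_of_lt (c : (Fin n ⊕ Fin m) → ℚ) {v : VarSet n G} (hv : v.1.1 < v.1.2) :
    dotQ c (aQ n m G z v) =
      c (.inl v.1.1) + c (.inl v.1.2) - c (.inr (edgeIdx z (v.2.resolve_left hv.ne))) := by
  rw [aQ, dif_neg hv.ne, if_pos hv, dotQ_eq_dotProduct, dotProduct_sub, dotProduct_add,
    dotProduct_single_one, dotProduct_single_one, dotProduct_single_one]

lemma dotQ_aQ_of_gt (c : (Fin n ⊕ Fin m) → ℚ) {v : VarSet n G} (hv : v.1.2 < v.1.1) :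
    dotQ c (aQ n m G z v) = c (.inr (edgeIdx z (v.2.resolve_left hv.ne'))) := by
  rw [aQ, dif_neg hv.ne', if_neg hv.not_gt, dotQ_eq_dotProduct, dotProduct_single_one]

lemma aQ_ne_zero (v : VarSet n G) : aQ n m G z v ≠ 0 := by
  intro h
  have h1 : dotQ (fun _ => 1) (aQ n m G z v) = 0 := by rw [h, dotQ_eq_dotProduct, dotProduct_zero]
  rcases lt_trichotomy v.1.1 v.1.2 with hv | hv | hv
  · rw [dotQ_aQ_of_lt z _ hv] at h1; norm_num at h1
  · rw [dotQ_aQ_of_eq z _ hv] at h1; norm_num at h1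
  · rw [dotQ_aQ_of_gt z _ hv] at h1; norm_num at h1

lemma eq_of_edgeIdx_eq {v w : VarSet n G} (hv : v.1.1 ≠ v.1.2) (hw : w.1.1 ≠ w.1.2)
    (hlt : v.1.1 < v.1.2 ↔ w.1.1 < w.1.2)
    (h : edgeIdx z (v.2.resolve_left hv) = edgeIdx z (w.2.resolve_left hw)) : v = w := by
  rw [edgeIdx, edgeIdx, Equiv.apply_eq_iff_eq, Subtype.mk_eq_mk, Sym2.eq_iff] at h
  rcases h with ⟨h1, h2⟩ | ⟨h1, h2⟩
  · exact Subtype.ext (Prod.ext h1 h2)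
  · rw [h1, h2] at hlt hv
    rcases hv.lt_or_gt with h | h
    exacts [absurd (hlt.mp h) h.not_gt, absurd (hlt.mpr h) h.not_gt]

lemma isExposedGenerator_aQ_of_eq {v : VarSet n G} (hv : v.1.1 = v.1.2) :
    IsExposedGenerator (aQ n m G z) v := by
  refine ⟨Sum.elim (fun j => if j = v.1.1 then 0 else 1) (fun _ => 1 / 2), ?_, fun w hwv => ?_⟩
  · simp [dotQ_aQ_of_eq z _ hv]
  rcases lt_trichotomy w.1.1 w.1.2 with hw | hw | hw
  · rw [dotQ_aQ_of_lt z _ hw]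
    simp only [Sum.elim_inl, Sum.elim_inr]
    split_ifs with h1 h2
    exacts [absurd (h1.trans h2.symm) hw.ne, by norm_num, by norm_num, by norm_num]
  · have hwv1 : w.1.1 ≠ v.1.1 := fun h =>
      hwv (Subtype.ext (Prod.ext h (hw.symm.trans (h.trans hv))))
    simp [dotQ_aQ_of_eq z _ hw, hwv1]
  · rw [dotQ_aQ_of_gt z _ hw]
    norm_num

lemma isExposedGenerator_aQ_of_lt {v : VarSet n G} (hv : v.1.1 < v.1.2) :
    IsExposedGenerator (aQ n m G z) v := by
  set t := edgeIdx z (v.2.resolve_left hv.ne)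
  refine ⟨Sum.elim (fun _ => 1) (fun s => if s = t then 2 else 1), ?_, fun w hwv => ?_⟩
  · rw [dotQ_aQ_of_lt z _ hv]
    simp only [Sum.elim_inl, Sum.elim_inr]
    rw [if_pos rfl]
    norm_num
  rcases lt_trichotomy w.1.1 w.1.2 with hw | hw | hw
  · have ht : edgeIdx z (w.2.resolve_left hw.ne) ≠ t := fun h =>
      hwv (eq_of_edgeIdx_eq z hw.ne hv.ne (iff_of_true hw hv) h)
    rw [dotQ_aQ_of_lt z _ hw]
    simp [ht]
  · rw [dotQ_aQ_of_eq z _ hw]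
    norm_num
  · rw [dotQ_aQ_of_gt z _ hw]
    simp only [Sum.elim_inr]
    split_ifs <;> norm_num

lemma isExposedGenerator_aQ_of_gt {v : VarSet n G} (hv : v.1.2 < v.1.1) :
    IsExposedGenerator (aQ n m G z) v := by
  set t := edgeIdx z (v.2.resolve_left hv.ne')
  refine ⟨Sum.elim (fun _ => 1) (fun s => if s = t then 0 else 1), ?_, fun w hwv => ?_⟩
  · rw [dotQ_aQ_of_gt z _ hv]
    exact if_pos rfl
  rcases lt_trichotomy w.1.1 w.1.2 with hw | hw | hw
  · rw [dotQ_aQ_of_lt z _ hw]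
    simp only [Sum.elim_inl, Sum.elim_inr]
    split_ifs <;> norm_num
  · rw [dotQ_aQ_of_eq z _ hw]
    norm_num
  · have ht : edgeIdx z (w.2.resolve_left hw.ne') ≠ t := fun h =>
      hwv (eq_of_edgeIdx_eq z hw.ne' hv.ne' (iff_of_false hw.not_gt hv.not_gt) h)
    rw [dotQ_aQ_of_gt z _ hw]
    simp [ht]

lemma isExposedGenerator_aQ (v : VarSet n G) : IsExposedGenerator (aQ n m G z) v := by
  rcases lt_trichotomy v.1.1 v.1.2 with hv | hv | hv
  exacts [isExposedGenerator_aQ_of_lt z hv, isExposedGenerator_aQ_of_eq z hv,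
    isExposedGenerator_aQ_of_gt z hv]

variable [DecidableRel G.Adj]

lemma posCone_eq_posSpan : posCone n m G z = posSpan (aQ n m G z) := rfl

include z in
lemma card_varSet : Fintype.card (VarSet n G) = 2 * m + n := by
  have hdisj : Disjoint (fun p : Fin n × Fin n => p.1 = p.2) (fun p => G.Adj p.1 p.2) :=
    fun _ h1 h2 p hp => G.ne_of_adj (h2 p hp) (h1 p hp)
  have hloops : Fintype.card {p : Fin n × Fin n // p.1 = p.2} = n :=
    (Fintype.card_congr ⟨fun p => p.1.1, fun i => ⟨(i, i), rfl⟩,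
      fun p => Subtype.ext (Prod.ext rfl p.2), fun _ => rfl⟩).trans (Fintype.card_fin n)
  have hdarts : Fintype.card {p : Fin n × Fin n // G.Adj p.1 p.2} = 2 * m := by
    rw [← Fintype.card_congr (⟨fun d => ⟨d.toProd, d.adj⟩, fun p => ⟨p.1, p.2⟩,
      fun _ => rfl, fun _ => rfl⟩ : G.Dart ≃ _), G.dart_card_eq_twice_card_edges,
      SimpleGraph.edgeFinset_card, ← Fintype.card_congr z, Fintype.card_fin]
  rw [Fintype.card_subtype_or_disjoint _ _ hdisj, hloops, hdarts, add_comm]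

end GraphCone

/-- The cone `σ = pos_ℚ(A_G)` has exactly `2m + n` extreme rays: they are
precisely the (pairwise distinct) rays spanned by the vectors `a ∈ A_G`. -/
theorem extreme_rays_of_posCone (n m : ℕ) (G : SimpleGraph (Fin n)) [DecidableRel G.Adj]
    (z : Fin m ≃ G.edgeSet) :
    {F | IsExtremeRay (posCone n m G z) F} = Set.range (fun v : VarSet n G => ray (aQ n m G z v))
      ∧ Function.Injective (fun v : VarSet n G => ray (aQ n m G z v))
      ∧ {F | IsExtremeRay (posCone n m G z) F}.ncard = 2 * m + n := by
  have hext := setOf_isExtremeRay_posSpan (isExposedGenerator_aQ z) (aQ_ne_zero z)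
  have hinj := ray_injective (isExposedGenerator_aQ z) (aQ_ne_zero z)
  rw [posCone_eq_posSpan, hext, Set.ncard_range_of_injective hinj, Nat.card_eq_fintype_card,
    card_varSet z]
  exact ⟨rfl, hinj, rfl⟩
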